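/- A positive semi-definite quadratic form Q on R^g belongs to the rational closure Ω_g^{rt} (i.e. its null space admits a basis of rational vectors) if and only if there exists h ∈ GL_g(Z) such that hQh^t is block diagonal of the form [[Q', 0],[0, 0]] with Q' a positive definite quadratic form on R^{g'} for some 0 ≤ g' ≤ g. -/

import Mathlib

/-!
If `ker Q` is spanned by rational vectors, it is spanned by the lattice `N = ker Q ∩ ℤ^g`, which
is saturated in `ℤ^g`; a Smith normal form basis therefore exhibits `N` as spanned by part of a
`ℤ`-basis of `ℤ^g`. With these basis vectors as the last rows of `h`, the form `h Q hᵀ` vanishes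
outside its top-left block, and that block is positive definite because the remaining rows of `h`
are independent modulo `ker Q`. Conversely, for such an `h` the kernel of `Q` is spanned by the
last rows of `h`, which are integral.
-/

open Matrix Function Set Submodule
open scoped ComplexOrder

theorem mem_span_basisFun_image_iff {R ι : Type*} [Semiring R] [Finite ι]
    {s : Set ι} {y : ι → R} :
    y ∈ span R (Pi.basisFun R ι '' s) ↔ ∀ i ∉ s, y i = 0 := by
  rw [Module.Basis.mem_span_image]
  refine ⟨fun h i hi => by_contra fun hy => hi (h (by simpa using hy)), fun h i hi => ?_⟩
  by_contra his
  exact (Finsupp.mem_support_iff.1 hi) (by simpa using h i his)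

theorem mem_span_basisFun_image_compl_range_iff {R ι κ : Type*} [Semiring R] [Finite ι]
    {e : κ → ι} {y : ι → R} : y ∈ span R (Pi.basisFun R ι '' (range e)ᶜ) ↔ y ∘ e = 0 := by
  rw [mem_span_basisFun_image_iff, funext_iff]
  simp

namespace Matrix

variable {ι κ : Type*} [Fintype ι] [Fintype κ]

theorem submatrix_mulVec_comp_of_apply_eq_zero {R : Type*} [NonUnitalNonAssocSemiring R]
    {M : Matrix ι ι R} {e : κ → ι} (he : Injective e) (hM : ∀ i, ∀ j ∉ range e, M i j = 0)
    (y : ι → R) : M.submatrix e e *ᵥ (y ∘ e) = (M *ᵥ y) ∘ e := by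
  ext a
  exact Fintype.sum_of_injective e he _ _ (fun j hj => by simp [hM _ j hj]) (fun _ => rfl)

section Field

variable {K : Type*} [Field K]

theorem span_basisFun_image_le_ker_iff {M : Matrix ι ι K} {s : Set ι} :
    span K (Pi.basisFun K ι '' s) ≤ LinearMap.ker M.mulVecLin ↔ ∀ j ∈ s, ∀ i, M i j = 0 := by
  classical
  rw [span_le, image_subset_iff]
  refine forall₂_congr fun j _ => ?_
  simp [funext_iff]

theorem ker_le_span_basisFun_iff {M : Matrix ι ι K} {e : κ → ι} (he : Injective e)
    (hM : ∀ i j, (i ∉ range e ∨ j ∉ range e) → M i j = 0) :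
    LinearMap.ker M.mulVecLin ≤ span K (Pi.basisFun K ι '' (range e)ᶜ) ↔
      LinearMap.ker (M.submatrix e e).mulVecLin = ⊥ := by
  have hcomp := submatrix_mulVec_comp_of_apply_eq_zero he fun i j hj => hM i j (Or.inr hj)
  rw [LinearMap.ker_eq_bot', SetLike.le_def]
  simp only [LinearMap.mem_ker, mulVecLin_apply, mem_span_basisFun_image_compl_range_iff]
  constructor
  · intro hker x hx
    set y := extend e x 0
    have hyx : y ∘ e = x := funext (he.extend_apply x 0)
    have hy : M *ᵥ y = 0 := by
      ext i
      by_cases hi : i ∈ range e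
      · obtain ⟨a, rfl⟩ := hi
        rw [← Function.comp_apply (f := M *ᵥ y), ← hcomp, hyx, hx]
        rfl
      · simp [mulVec, dotProduct, hM i _ (Or.inl hi)]
    exact hyx ▸ hker hy
  · intro hinj y hy
    exact hinj _ (by rw [hcomp, hy]; rfl)

theorem ker_mul_mul_transpose_eq_span_iff [DecidableEq ι] {A : Matrix ι ι K} (hA : IsUnit A)
    (Q : Matrix ι ι K) (s : Set ι) :
    LinearMap.ker (A * Q * Aᵀ).mulVecLin = span K (Pi.basisFun K ι '' s) ↔
      LinearMap.ker Q.mulVecLin = span K (A.row '' s) := by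
  have hAt : IsUnit Aᵀ := (isUnit_transpose A).2 hA
  have hker : LinearMap.ker (A * Q * Aᵀ).mulVecLin =
      (LinearMap.ker Q.mulVecLin).comap Aᵀ.mulVecLin := by
    rw [mulVecLin_mul, mulVecLin_mul, LinearMap.comp_assoc, LinearMap.ker_comp_of_ker_eq_bot,
      LinearMap.ker_comp]
    exact LinearMap.ker_eq_bot.2 (mulVec_injective_iff_isUnit.2 hA)
  have hrows : span K (A.row '' s) = (span K (Pi.basisFun K ι '' s)).map Aᵀ.mulVecLin := by
    rw [map_span, ← image_comp]
    congr 1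
    exact image_congr fun i _ => by simp
  rw [hker, hrows]
  constructor
  · intro h
    rw [← h, map_comap_eq_of_surjective (mulVec_surjective_iff_isUnit.2 hAt)]
  · intro h
    rw [h, comap_map_eq_of_injective (mulVec_injective_iff_isUnit.2 hAt)]

end Field

theorem PosSemidef.ker_eq_span_basisFun_iff {𝕜 : Type*} [RCLike 𝕜] {M : Matrix ι ι 𝕜}
    (hM : M.PosSemidef) {e : κ → ι} (he : Injective e) :
    LinearMap.ker M.mulVecLin = span 𝕜 (Pi.basisFun 𝕜 ι '' (range e)ᶜ) ↔
      (∀ i j, (i ∉ range e ∨ j ∉ range e) → M i j = 0) ∧ (M.submatrix e e).PosDef := by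
  classical
  have hcols : (∀ i j, (i ∉ range e ∨ j ∉ range e) → M i j = 0) ↔
      ∀ j ∉ range e, ∀ i, M i j = 0 := by
    refine ⟨fun h j hj i => h i j (Or.inr hj), fun h i j => ?_⟩
    rintro (hi | hj)
    · rw [← hM.isHermitian.apply, h i hi, star_zero]
    · exact h j hj i
  rw [(hM.submatrix e).posDef_iff_isUnit, ← mulVec_injective_iff_isUnit, ← coe_mulVecLin,
    ← LinearMap.ker_eq_bot]
  refine ⟨fun hker => ?_, fun ⟨hzero, hinj⟩ => ?_⟩
  · have hzero := hcols.2 (span_basisFun_image_le_ker_iff.1 hker.ge)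
    exact ⟨hzero, (ker_le_span_basisFun_iff he hzero).1 hker.le⟩
  · exact le_antisymm ((ker_le_span_basisFun_iff he hzero).2 hinj)
      (span_basisFun_image_le_ker_iff.2 (hcols.1 hzero))

theorem PosSemidef.ker_eq_span_row_image_iff [DecidableEq ι] {Q A : Matrix ι ι ℝ}
    (hQ : Q.PosSemidef) (hA : IsUnit A) {e : κ → ι} (he : Injective e) :
    LinearMap.ker Q.mulVecLin = span ℝ (A.row '' (range e)ᶜ) ↔
      (∀ i j, (i ∉ range e ∨ j ∉ range e) → (A * Q * Aᵀ) i j = 0) ∧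
        ((A * Q * Aᵀ).submatrix e e).PosDef := by
  have hconj : (A * Q * Aᵀ).PosSemidef := by
    simpa using hQ.mul_mul_conjTranspose_same A
  exact (ker_mul_mul_transpose_eq_span_iff hA Q _).symm.trans
    (hconj.ker_eq_span_basisFun_iff he)

end Matrix

theorem exists_intCast_eq_smul_of_forall_exists_ratCast {ι : Type*} [Finite ι] {x : ι → ℝ}
    (hx : ∀ i, ∃ q : ℚ, x i = q) : ∃ d : ℤ, d ≠ 0 ∧ ∃ v : ι → ℤ, ∀ i, (v i : ℝ) = d * x i := by
  choose q hq using hx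
  obtain ⟨⟨d, hd⟩, hint⟩ := IsLocalization.exist_integer_multiples_of_finite (nonZeroDivisors ℤ) q
  choose v hv using hint
  refine ⟨d, nonZeroDivisors.ne_zero hd, v, fun i => ?_⟩
  simp only [algebraMap_int_eq, eq_intCast, zsmul_eq_mul] at hv
  rw [hq]
  exact_mod_cast hv i

theorem Submodule.exists_basis_eq_span_image_of_eq_span_rat {ι : Type*} [Finite ι]
    (K : Submodule ℝ (ι → ℝ)) (hK : K = span ℝ {x | x ∈ K ∧ ∀ i, ∃ q : ℚ, x i = q}) :
    ∃ (b : Module.Basis ι ℤ (ι → ℤ)) (s : Set ι), K = span ℝ ((fun i j => (b i j : ℝ)) '' s) := by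
  let castLin : (ι → ℤ) →ₗ[ℤ] (ι → ℝ) := (Algebra.linearMap ℤ ℝ).compLeft ι
  have hcast : ∀ v : ι → ℤ, castLin v = fun j => (v j : ℝ) := fun v => by ext; simp [castLin]
  let N : Submodule ℤ (ι → ℤ) := (K.restrictScalars ℤ).comap castLin
  obtain ⟨n, bM, bN, f, a, snf⟩ := N.smithNormalForm (Pi.basisFun ℤ ι)
  refine ⟨bM, range f, ?_⟩
  set T := span ℝ ((fun i j => (bM i j : ℝ)) '' range f)
  have hN : N = span ℤ (range (N.subtype ∘ bN)) := by
    rw [range_comp, span_image, bN.span_eq, Submodule.map_top, range_subtype]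
  have hT : N ≤ (T.restrictScalars ℤ).comap castLin := by
    rw [hN, span_le]
    rintro _ ⟨k, rfl⟩
    change castLin (bN k) ∈ T
    rw [snf, map_zsmul, hcast]
    exact zsmul_mem (subset_span (mem_image_of_mem _ (mem_range_self k))) _
  apply le_antisymm
  · rw [hK, span_le]
    rintro x ⟨hxK, hx⟩
    obtain ⟨d, hd, v, hv⟩ := exists_intCast_eq_smul_of_forall_exists_ratCast hx
    have hvx : castLin v = (d : ℝ) • x := by
      ext i
      simp [hcast, hv]
    have hvN : v ∈ N := show castLin v ∈ K from hvx ▸ K.smul_mem _ hxK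
    have hdx : (d : ℝ) • x ∈ T := hvx ▸ hT hvN
    exact (smul_mem_iff T (Int.cast_ne_zero.2 hd : (d : ℝ) ≠ 0)).1 hdx
  · -- `N` is saturated, so `bM (f k)` itself, not only `a k • bM (f k) = bN k`, lies in `N`.
    rw [span_le]
    rintro _ ⟨_, ⟨k, rfl⟩, rfl⟩
    have hbN : castLin (bN k) ∈ K := (bN k).2
    have ha : (a k : ℝ) ≠ 0 := by
      have hbN0 : (bN k : ι → ℤ) ≠ 0 := by simpa using bN.ne_zero k
      exact_mod_cast fun h => hbN0 (by rw [snf, h, zero_smul])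
    rw [snf, map_zsmul, ← Int.cast_smul_eq_zsmul ℝ, smul_mem_iff K ha, hcast] at hbN
    exact hbN

theorem Fin.exists_perm_image_compl_range_castLE {g : ℕ} (s : Set (Fin g)) :
    ∃ (g' : ℕ) (hg' : g' ≤ g) (σ : Equiv.Perm (Fin g)), σ '' (range (Fin.castLE hg'))ᶜ = s := by
  classical
  have hs : Fintype.card s ≤ g := by simpa using Fintype.card_subtype_le (· ∈ s)
  refine ⟨g - Fintype.card s, Nat.sub_le _ _, ?_⟩
  set C := (range (Fin.castLE (Nat.sub_le g (Fintype.card s))))ᶜ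
  have hC : Fintype.card C = Fintype.card s := by
    rw [Fintype.card_compl_set, card_range_of_injective (Fin.castLE_injective _)]
    simp only [Fintype.card_fin]
    omega
  let e : C ≃ s := Fintype.equivOfCardEq hC
  refine ⟨e.extendSubtype, subset_antisymm ?_ fun y hy => ?_⟩
  · rintro _ ⟨x, hx, rfl⟩
    exact e.extendSubtype_mem x hx
  · refine ⟨e.symm ⟨y, hy⟩, (e.symm ⟨y, hy⟩).2, ?_⟩
    rw [e.extendSubtype_apply_of_mem _ (e.symm ⟨y, hy⟩).2]
    simp

theorem Submodule.exists_isUnit_det_eq_span_row_image_of_eq_span_rat {g : ℕ}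
    (K : Submodule ℝ (Fin g → ℝ)) (hK : K = span ℝ {x | x ∈ K ∧ ∀ i, ∃ q : ℚ, x i = q}) :
    ∃ h : Matrix (Fin g) (Fin g) ℤ, IsUnit h.det ∧ ∃ (g' : ℕ) (hg' : g' ≤ g),
      K = span ℝ ((h.map (Int.cast : ℤ → ℝ)).row '' (range (Fin.castLE hg'))ᶜ) := by
  obtain ⟨b, s, hKs⟩ := K.exists_basis_eq_span_image_of_eq_span_rat hK
  obtain ⟨g', hg', σ, hσ⟩ := Fin.exists_perm_image_compl_range_castLE s
  refine ⟨of fun i => b (σ i), ?_, g', hg', ?_⟩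
  · have hbasis := (Pi.basisFun ℤ (Fin g)).is_basis_iff_det.1
      ⟨(b.reindex σ.symm).linearIndependent, (b.reindex σ.symm).span_eq⟩
    rwa [Pi.basisFun_det_apply, Module.Basis.coe_reindex, Equiv.symm_symm] at hbasis
  · rw [hKs, ← hσ, image_image]
    rfl

theorem stmt2_general {g : ℕ} (Q : Matrix (Fin g) (Fin g) ℝ) (hQ : Q.PosSemidef) :
    (LinearMap.ker Q.mulVecLin =
        Submodule.span ℝ {x : Fin g → ℝ | Q.mulVec x = 0 ∧ ∀ i, ∃ q : ℚ, x i = (q : ℝ)})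
      ↔
    ∃ (h : Matrix (Fin g) (Fin g) ℤ), IsUnit h.det ∧
      ∃ (g' : ℕ) (hg' : g' ≤ g),
        (∀ i j : Fin g, ((g' : ℕ) ≤ (i : ℕ) ∨ (g' : ℕ) ≤ (j : ℕ)) →
          ((h.map (Int.cast : ℤ → ℝ)) * Q * (h.map (Int.cast : ℤ → ℝ))ᵀ) i j = 0) ∧
        (Matrix.PosDef (fun i j : Fin g' =>
          ((h.map (Int.cast : ℤ → ℝ)) * Q * (h.map (Int.cast : ℤ → ℝ))ᵀ)
            (Fin.castLE hg' i) (Fin.castLE hg' j))) := by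
  have hunit : ∀ h : Matrix (Fin g) (Fin g) ℤ, IsUnit h.det → IsUnit (h.map (Int.cast : ℤ → ℝ)) :=
    fun h hdet => ((isUnit_iff_isUnit_det h).2 hdet).map (Int.castRingHom ℝ).mapMatrix
  have hcompl : ∀ {g'} (hg' : g' ≤ g) (i : Fin g), i ∉ range (Fin.castLE hg') ↔ g' ≤ (i : ℕ) :=
    fun hg' i => by simp [Fin.range_castLE]
  constructor
  · intro hker
    obtain ⟨h, hdet, g', hg', hspan⟩ :=
      (LinearMap.ker Q.mulVecLin).exists_isUnit_det_eq_span_row_image_of_eq_span_rat hker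
    obtain ⟨hzero, hpos⟩ :=
      (hQ.ker_eq_span_row_image_iff (hunit h hdet) (Fin.castLE_injective hg')).1 hspan
    exact ⟨h, hdet, g', hg', fun i j hij => hzero i j (by simpa only [hcompl] using hij), hpos⟩
  · rintro ⟨h, hdet, g', hg', hzero, hpos⟩
    have hspan := (hQ.ker_eq_span_row_image_iff (hunit h hdet) (Fin.castLE_injective hg')).2
      ⟨fun i j hij => hzero i j (by simpa only [hcompl] using hij), hpos⟩
    refine le_antisymm ?_ (span_le.2 fun x hx => hx.1)
    rw [hspan]
    refine span_mono ?_
    rintro _ ⟨i, hi, rfl⟩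
    have hrow : (h.map (Int.cast : ℤ → ℝ)).row i ∈ LinearMap.ker Q.mulVecLin :=
      hspan ▸ subset_span ⟨i, hi, rfl⟩
    exact ⟨hrow, fun j => ⟨h i j, by simp⟩⟩

/-- A positive semi-definite quadratic form `Q` on `ℝ^g` has a null space
admitting a basis of rational vectors (i.e. its null space is spanned by its rational
points) if and only if there exists `h ∈ GL_g(ℤ)` such that `h Q hᵀ` is block diagonal
`[[Q', 0], [0, 0]]` with `Q'` positive definite of size `g' ≤ g`. -/
theorem stmt2 {g : ℕ} (Q : Matrix (Fin g) (Fin g) ℝ) (hsym : Qᵀ = Q)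
    (hQ : Q.PosSemidef) :
    (LinearMap.ker Q.mulVecLin =
        Submodule.span ℝ {x : Fin g → ℝ | Q.mulVec x = 0 ∧ ∀ i, ∃ q : ℚ, x i = (q : ℝ)})
      ↔
    ∃ (h : Matrix (Fin g) (Fin g) ℤ), IsUnit h.det ∧
      ∃ (g' : ℕ) (hg' : g' ≤ g),
        (∀ i j : Fin g, ((g' : ℕ) ≤ (i : ℕ) ∨ (g' : ℕ) ≤ (j : ℕ)) →
          ((h.map (Int.cast : ℤ → ℝ)) * Q * (h.map (Int.cast : ℤ → ℝ))ᵀ) i j = 0) ∧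
        (Matrix.PosDef (fun i j : Fin g' =>
          ((h.map (Int.cast : ℤ → ℝ)) * Q * (h.map (Int.cast : ℤ → ℝ))ᵀ)
            (Fin.castLE hg' i) (Fin.castLE hg' j))) :=
  stmt2_general Q hQ
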